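/- Let M ∈ R^{m×d}, Ω ∈ R^{p×d}, x ∈ R^d, y = Mx + w with ‖w‖₂ ≤ η, and let T(x) = cone{z − x : ‖Ωz‖₁ ≤ ‖Ωx‖₁} be the tangent cone. If inf{‖Mv‖₂ : v ∈ T(x), ‖v‖₂ ≤ 1} ≥ τ for some τ > 0, then any minimizer x̂ of min_z ‖Ωz‖₁ subject to ‖Mz − y‖₂ ≤ η satisfies ‖x − x̂‖₂ ≤ 2η/τ. -/

import Mathlib

open MeasureTheory ProbabilityTheory Real Finset Pointwise
noncomputable section
/-- Euclidean inner product. -/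
def ip {ι : Type*} [Fintype ι] (u v : ι → ℝ) : ℝ := ∑ i, u i * v i
/-- ℓ1 norm. -/
def l1 {ι : Type*} [Fintype ι] (v : ι → ℝ) : ℝ := ∑ i, |v i|
/-- Euclidean (ℓ2) norm. -/
def l2 {ι : Type*} [Fintype ι] (v : ι → ℝ) : ℝ := Real.sqrt (∑ i, v i ^ 2)
/-- Standard Gaussian measure on ι → ℝ. -/
def stdGaussian (ι : Type*) [Fintype ι] : Measure (ι → ℝ) :=
  Measure.pi fun _ => gaussianReal 0 1
/-- Matrix-vector product, matrix given by its rows. -/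
def amul {ι κ : Type*} [Fintype ι] [Fintype κ] (Ω : ι → κ → ℝ) (z : κ → ℝ) : ι → ℝ :=
  fun i => ip (Ω i) z
/-- Transposed matrix-vector product. -/
def atmul {ι κ : Type*} [Fintype ι] [Fintype κ] (Ω : ι → κ → ℝ) (α : ι → ℝ) : κ → ℝ :=
  fun j => ∑ i, α i * Ω i j
/-- Gaussian width of a set. -/
def gaussWidth {ι : Type*} [Fintype ι] (S : Set (ι → ℝ)) : ℝ :=
  ∫ g, sSup ((fun w => ip g w) '' S) ∂stdGaussian ι
/-- Euclidean distance from a point to a set. -/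
def distTo {ι : Type*} [Fintype ι] (g : ι → ℝ) (S : Set (ι → ℝ)) : ℝ :=
  sInf ((fun u => l2 (g - u)) '' S)
/-- max of ‖Ωz‖₁ over the Euclidean unit ball. -/
def maxL1 {ι κ : Type*} [Fintype ι] [Fintype κ] (Ω : ι → κ → ℝ) : ℝ :=
  sSup ((fun z => l1 (amul Ω z)) '' {z | l2 z ≤ 1})
/-- Subdifferential of f at x. -/
def subdiffAt {ι : Type*} [Fintype ι] (f : (ι → ℝ) → ℝ) (x : ι → ℝ) : Set (ι → ℝ) :=
  {v | ∀ z, f x + ip (z - x) v ≤ f z}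
/-- Tangent (descent) cone of ‖Ω·‖₁ at x. -/
def tangentCone {ι κ : Type*} [Fintype ι] [Fintype κ] (Ω : ι → κ → ℝ) (x : κ → ℝ) :
    Set (κ → ℝ) :=
  {v | ∃ (t : ℝ) (z : κ → ℝ), 0 ≤ t ∧ l1 (amul Ω z) ≤ l1 (amul Ω x) ∧ v = t • (z - x)}
lemma l2_eq_norm {n : ℕ} (v : Fin n → ℝ) :
    l2 v = ‖(WithLp.equiv 2 (Fin n → ℝ)).symm v‖ := by
  simp [l2, EuclideanSpace.norm_eq, Real.norm_eq_abs, sq_abs]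

lemma l2_nonneg {n : ℕ} (v : Fin n → ℝ) : 0 ≤ l2 v := Real.sqrt_nonneg _

lemma l2_neg {n : ℕ} (v : Fin n → ℝ) : l2 (-v) = l2 v := by
  simp [l2, neg_sq]

lemma l2_smul {n : ℕ} (c : ℝ) (v : Fin n → ℝ) : l2 (c • v) = |c| * l2 v := by
  rw [l2_eq_norm, l2_eq_norm]
  have h : (WithLp.equiv 2 (Fin n → ℝ)).symm (c • v)
      = c • (WithLp.equiv 2 (Fin n → ℝ)).symm v := rfl
  rw [h, norm_smul, Real.norm_eq_abs]

lemma l2_add_le {n : ℕ} (u v : Fin n → ℝ) : l2 (u + v) ≤ l2 u + l2 v := by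
  rw [l2_eq_norm, l2_eq_norm, l2_eq_norm]
  exact norm_add_le _ _

lemma amul_smul {m d : ℕ} (M : Fin m → Fin d → ℝ) (c : ℝ) (v : Fin d → ℝ) :
    amul M (c • v) = c • amul M v := by
  funext i
  simp [amul, ip, Finset.mul_sum, mul_comm, mul_left_comm]

lemma amul_sub {m d : ℕ} (M : Fin m → Fin d → ℝ) (u v : Fin d → ℝ) :
    amul M (u - v) = amul M u - amul M v := by
  funext i
  simp [amul, ip, mul_sub, Finset.sum_sub_distrib]

theorem robust_recovery_from_tangent_cone (m p d : ℕ) (M : Fin m → Fin d → ℝ)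
    (Ω : Fin p → Fin d → ℝ) (x : Fin d → ℝ) (w : Fin m → ℝ) (η τ : ℝ)
    (hw : l2 w ≤ η) (hτ : 0 < τ)
    (hM : ∀ v ∈ tangentCone Ω x, l2 v ≤ 1 → τ ≤ l2 (amul M v))
    (x' : Fin d → ℝ)
    (hfeas : l2 (amul M x' - (amul M x + w)) ≤ η)
    (hmin : ∀ z : Fin d → ℝ,
      l2 (amul M z - (amul M x + w)) ≤ η → l1 (amul Ω x') ≤ l1 (amul Ω z)) :
    l2 (x - x') ≤ 2 * η / τ := by
  have hη : 0 ≤ η := le_trans (l2_nonneg w) hw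
  set v := x' - x with hvdef
  have hxfeas : l2 (amul M x - (amul M x + w)) ≤ η := by
    have h : amul M x - (amul M x + w) = -w := by ring
    rw [h, l2_neg]; exact hw
  have hl1 : l1 (amul Ω x') ≤ l1 (amul Ω x) := hmin x hxfeas
  have hswap : l2 (x - x') = l2 v := by
    have h : x - x' = -v := by simp [hvdef]
    rw [h, l2_neg]
  rw [hswap]
  have hMv : l2 (amul M v) ≤ 2 * η := by
    have h1 : amul M v = (amul M x' - (amul M x + w)) + w := by
      rw [hvdef, amul_sub]; ring
    rw [h1]
    calc l2 ((amul M x' - (amul M x + w)) + w)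
        ≤ l2 (amul M x' - (amul M x + w)) + l2 w := l2_add_le _ _
      _ ≤ η + η := add_le_add hfeas hw
      _ = 2 * η := by ring
  rcases eq_or_lt_of_le (l2_nonneg v) with h0 | h0
  · rw [← h0]
    positivity
  · set u := (l2 v)⁻¹ • v with hudef
    have hucone : u ∈ tangentCone Ω x :=
      ⟨(l2 v)⁻¹, x', by positivity, hl1, rfl⟩
    have hu1 : l2 u ≤ 1 := by
      rw [hudef, l2_smul, abs_of_nonneg (by positivity),
        inv_mul_cancel₀ (ne_of_gt h0)]
    have hτu := hM u hucone hu1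
    have hMu : l2 (amul M u) = (l2 v)⁻¹ * l2 (amul M v) := by
      rw [hudef, amul_smul, l2_smul, abs_of_nonneg (by positivity)]
    rw [hMu] at hτu
    have hkey : τ * l2 v ≤ l2 (amul M v) := by
      rw [mul_comm]
      calc l2 v * τ ≤ l2 v * ((l2 v)⁻¹ * l2 (amul M v)) :=
            mul_le_mul_of_nonneg_left hτu (le_of_lt h0)
        _ = l2 (amul M v) := by field_simp
    rw [div_eq_mul_inv, ← mul_le_mul_iff_of_pos_right hτ, mul_assoc,
      inv_mul_cancel₀ (ne_of_gt hτ), mul_one, mul_comm]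
    exact le_trans hkey hMv

end
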